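/- (The Spread Construction.) Let G be a group of order 36 with a normal subgroup H that is elementary abelian of order 9, with order-3 subgroups L₀, L₁, L₂, L₃. Let x, y ∈ G be such that {1, x, y, xy} is a left transversal of H in G, let h₁, h₂, h₃ ∈ H, and suppose the set of subgroups {L₀, xL₁x⁻¹, yL₂y⁻¹, (xy)L₃(xy)⁻¹} equals {L₀, L₁, L₂, L₃}. In ℤ[G] set S := L̂₀ − x·h₁·L̂₁ − y·h₂·L̂₂ − xy·h₃·L̂₃, where L̂ᵢ = H − 2Lᵢ. Then all coefficients of S are ±1, and the set {g ∈ G : the coefficient of g in S equals 1} is a (36, 15, 6) difference set in G. -/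

import Mathlib

/-- The group ring element `∑_{x ∈ X} x` associated to a subset `X` of a group `G`. -/
noncomputable def grpSum {G : Type*} [Group G] (X : Finset G) : MonoidAlgebra ℤ G :=
  ∑ x ∈ X, MonoidAlgebra.single x (1 : ℤ)

/-- The finset of elements of a subgroup of a finite group. -/
noncomputable def subFinset {G : Type*} [Group G] [Finite G] (K : Subgroup G) : Finset G :=
  (Set.toFinite (K : Set G)).toFinset

/-- The conjugate subgroup `gKg⁻¹`. -/
def conjSub {G : Type*} [Group G] (g : G) (K : Subgroup G) : Subgroup G :=
  K.map (MulAut.conj g).toMonoidHom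

/-- `D` is a `(v,k,λ)`-difference set in the finite group `G`. -/
def IsDiffSet {G : Type*} [Group G] [Fintype G] [DecidableEq G]
    (v k l : ℕ) (D : Finset G) : Prop :=
  Fintype.card G = v ∧ D.card = k ∧
  ∀ g : G, g ≠ 1 → ((D ×ˢ D).filter (fun p => p.1 * p.2⁻¹ = g)).card = l

set_option linter.unusedSectionVars false
set_option linter.unusedVariables false
set_option maxHeartbeats 1000000

namespace SpreadAux

open MonoidAlgebra Finset

variable {G : Type*} [Group G] [Fintype G] [DecidableEq G]

lemma mem_subFinset {K : Subgroup G} {g : G} : g ∈ subFinset K ↔ g ∈ K := by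
  simp [subFinset]

lemma card_subFinset (K : Subgroup G) : (subFinset K).card = Nat.card K := by
  classical
  rw [subFinset, Set.Finite.card_toFinset, Nat.card_eq_fintype_card]
  exact Fintype.card_congr (Equiv.refl _)

lemma cf_sum_apply {ι : Type*} (s : Finset ι) (f : ι → MonoidAlgebra ℤ G) (g : G) :
    (∑ i ∈ s, f i).coeff g = ∑ i ∈ s, (f i).coeff g := by
  rw [MonoidAlgebra.coeff_sum, Finsupp.finset_sum_apply]

lemma cf_smul_apply (c : ℤ) (f : MonoidAlgebra ℤ G) (g : G) : (c • f).coeff g = c • f.coeff g := rfl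

lemma cf_sub_apply (f k : MonoidAlgebra ℤ G) (g : G) : (f - k).coeff g = f.coeff g - k.coeff g := rfl

lemma cf_add_apply (f k : MonoidAlgebra ℤ G) (g : G) : (f + k).coeff g = f.coeff g + k.coeff g := rfl

lemma grpSum_apply (X : Finset G) (g : G) : (grpSum X).coeff g = if g ∈ X then 1 else 0 := by
  classical
  rw [grpSum, cf_sum_apply]
  simp [MonoidAlgebra.single_apply, Finsupp.single_apply]

lemma sum_single_eq (f : MonoidAlgebra ℤ G) : ∑ c : G, MonoidAlgebra.single c (f.coeff c) = f := by
  ext g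
  rw [cf_sum_apply]
  simp [MonoidAlgebra.single_apply, Finsupp.single_apply]

lemma mul_apply_conv (f k : MonoidAlgebra ℤ G) (g : G) :
    (f * k).coeff g = ∑ c : G, f.coeff c * k.coeff (c⁻¹ * g) := by
  conv_lhs => rw [← sum_single_eq f]
  rw [Finset.sum_mul, cf_sum_apply]
  simp [MonoidAlgebra.single_mul_apply]

lemma grpSum_mul_apply (X Y : Finset G) (g : G) :
    (grpSum X * grpSum Y).coeff g = ((X.filter fun c => c⁻¹ * g ∈ Y).card : ℤ) := by
  rw [mul_apply_conv]
  have h : (X.filter fun c => c⁻¹ * g ∈ Y)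
      = Finset.univ.filter (fun c => c ∈ X ∧ c⁻¹ * g ∈ Y) := by
    ext c; simp
  rw [h, ← Finset.sum_boole]
  apply Finset.sum_congr rfl
  intro c _
  by_cases h1 : c ∈ X <;> by_cases h2 : c⁻¹ * g ∈ Y <;> simp [grpSum_apply, h1, h2]

lemma sum_grpSum (X : Finset G) : ∑ g : G, (grpSum X).coeff g = (X.card : ℤ) := by
  classical
  simp only [grpSum_apply]
  rw [Finset.sum_boole]
  congr 1
  apply Finset.card_bij (fun a _ => a) <;> simp


/-- M * K = |K| • M for K ≤ M. -/
lemma sub_mul_sub {K M : Subgroup G} (hKM : K ≤ M) :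
    grpSum (subFinset M) * grpSum (subFinset K)
      = (Nat.card K : ℤ) • grpSum (subFinset M) := by
  ext g
  rw [cf_smul_apply, grpSum_mul_apply, grpSum_apply, smul_eq_mul]
  by_cases hg : g ∈ M
  · have : ((subFinset M).filter fun c => c⁻¹ * g ∈ subFinset K)
        = (subFinset K).image (fun k => g * k⁻¹) := by
      ext c
      simp only [Finset.mem_filter, Finset.mem_image, mem_subFinset]
      constructor
      · rintro ⟨h1, h2⟩
        exact ⟨c⁻¹ * g, h2, by group⟩
      · rintro ⟨k, hk, rfl⟩
        refine ⟨M.mul_mem hg (M.inv_mem (hKM hk)), ?_⟩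
        have h3 : (g * k⁻¹)⁻¹ * g = k := by group
        rw [h3]; exact hk
    rw [this, Finset.card_image_of_injective _ (fun u v huv => by
      simpa using mul_left_cancel huv), card_subFinset]
    simp [mem_subFinset, hg]
  · have : ((subFinset M).filter fun c => c⁻¹ * g ∈ subFinset K) = ∅ := by
      ext c
      simp only [Finset.mem_filter, mem_subFinset, Finset.notMem_empty, iff_false, not_and]
      intro h1 h2
      exact hg (by simpa using M.mul_mem h1 (hKM h2))
    rw [this]
    simp [mem_subFinset, hg]

/-- K * M = |K| • M for K ≤ M. -/
lemma sub_mul_sub' {K M : Subgroup G} (hKM : K ≤ M) :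
    grpSum (subFinset K) * grpSum (subFinset M)
      = (Nat.card K : ℤ) • grpSum (subFinset M) := by
  ext g
  rw [cf_smul_apply, grpSum_mul_apply, grpSum_apply, smul_eq_mul]
  by_cases hg : g ∈ M
  · have : ((subFinset K).filter fun c => c⁻¹ * g ∈ subFinset M) = subFinset K := by
      apply Finset.filter_true_of_mem
      intro c hc
      rw [mem_subFinset] at hc ⊢
      exact M.mul_mem (M.inv_mem (hKM hc)) hg
    rw [this, card_subFinset]
    simp [mem_subFinset, hg]
  · have : ((subFinset K).filter fun c => c⁻¹ * g ∈ subFinset M) = ∅ := by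
      ext c
      simp only [Finset.mem_filter, mem_subFinset, Finset.notMem_empty, iff_false, not_and]
      intro h1 h2
      exact hg (by simpa using M.mul_mem (hKM h1) h2)
    rw [this]
    simp [mem_subFinset, hg]

/-- K₁ * K₂ = M when K₁ ∩ K₂ = 1 and |K₁||K₂| = |M|. -/
lemma sub_mul_sub_disjoint {K₁ K₂ M : Subgroup G} (h1 : K₁ ≤ M) (h2 : K₂ ≤ M)
    (hmeet : K₁ ⊓ K₂ = ⊥) (hcard : Nat.card K₁ * Nat.card K₂ = Nat.card M) :
    grpSum (subFinset K₁) * grpSum (subFinset K₂) = grpSum (subFinset M) := by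
  classical
  have hinj : Set.InjOn (fun p : G × G => p.1 * p.2)
      ↑((subFinset K₁) ×ˢ (subFinset K₂)) := by
    rintro ⟨u, v⟩ huv ⟨u', v'⟩ hu'v' heq
    rw [Finset.mem_coe, Finset.mem_product] at huv hu'v'
    simp only [mem_subFinset] at huv hu'v'
    simp only at heq
    have hm : u'⁻¹ * u ∈ K₁ ⊓ K₂ := by
      constructor
      · exact K₁.mul_mem (K₁.inv_mem hu'v'.1) huv.1
      · have hvv : u'⁻¹ * u = v' * v⁻¹ := by
          rw [eq_comm, mul_inv_eq_iff_eq_mul, mul_assoc, heq, inv_mul_cancel_left]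
        rw [hvv]
        exact K₂.mul_mem hu'v'.2 (K₂.inv_mem huv.2)
    rw [hmeet, Subgroup.mem_bot] at hm
    have hu : u = u' := (inv_mul_eq_one.mp hm).symm
    refine Prod.ext hu ?_
    rw [hu] at heq
    exact mul_left_cancel heq
  have himage : ((subFinset K₁) ×ˢ (subFinset K₂)).image (fun p : G × G => p.1 * p.2)
      = subFinset M := by
    apply Finset.eq_of_subset_of_card_le
    · intro g hg
      simp only [Finset.mem_image, Finset.mem_product, mem_subFinset] at hg ⊢
      obtain ⟨⟨u, v⟩, ⟨hu, hv⟩, rfl⟩ := hg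
      exact M.mul_mem (h1 hu) (h2 hv)
    · rw [Finset.card_image_of_injOn hinj, Finset.card_product,
        card_subFinset, card_subFinset, card_subFinset, hcard]
  ext g
  rw [grpSum_mul_apply, grpSum_apply]
  by_cases hg : g ∈ M
  · have hmem : g ∈ ((subFinset K₁) ×ˢ (subFinset K₂)).image (fun p : G × G => p.1 * p.2) := by
      rw [himage, mem_subFinset]; exact hg
    obtain ⟨p, hp, hpg⟩ := Finset.mem_image.1 hmem
    obtain ⟨u, v⟩ := p
    rw [Finset.mem_product] at hp
    obtain ⟨hu, hv⟩ := hp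
    simp only at hpg
    have hfil : ((subFinset K₁).filter fun c => c⁻¹ * g ∈ subFinset K₂) = {u} := by
      ext c
      simp only [Finset.mem_filter, Finset.mem_singleton]
      constructor
      · rintro ⟨hc1, hc2⟩
        have heq2 : (fun p : G × G => p.1 * p.2) (c, c⁻¹ * g)
            = (fun p : G × G => p.1 * p.2) (u, v) := by
          simp only
          rw [mul_inv_cancel_left, hpg]
        have h4 := hinj (Finset.mem_coe.2 (Finset.mem_product.2 ⟨hc1, hc2⟩))
          (Finset.mem_coe.2 (Finset.mem_product.2 ⟨hu, hv⟩)) heq2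
        exact congrArg Prod.fst h4
      · intro hcu
        subst hcu
        refine ⟨hu, ?_⟩
        have hgv : c⁻¹ * g = v := by rw [← hpg, inv_mul_cancel_left]
        rw [hgv]; exact hv
    rw [hfil]
    simp [mem_subFinset, hg]
  · have hfil : ((subFinset K₁).filter fun c => c⁻¹ * g ∈ subFinset K₂) = ∅ := by
      ext c
      simp only [Finset.mem_filter, mem_subFinset, Finset.notMem_empty, iff_false, not_and]
      intro hc1 hc2
      exact hg (by simpa using M.mul_mem (h1 hc1) (h2 hc2))
    rw [hfil]
    simp [mem_subFinset, hg]

/-- conjugation of a subgroup sum -/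
lemma single_mul_grpSum_mul_single (K : Subgroup G) (c : G) :
    MonoidAlgebra.single c (1 : ℤ) * grpSum (subFinset K) * MonoidAlgebra.single c⁻¹ (1 : ℤ)
      = grpSum (subFinset (conjSub c K)) := by
  ext g
  rw [MonoidAlgebra.mul_single_apply, MonoidAlgebra.single_mul_apply]
  rw [grpSum_apply, grpSum_apply]
  have hmem : c⁻¹ * (g * c⁻¹⁻¹) ∈ subFinset K ↔ g ∈ subFinset (conjSub c K) := by
    rw [mem_subFinset, mem_subFinset, inv_inv]
    constructor
    · intro h
      exact ⟨c⁻¹ * (g * c), h, by simp only [MulEquiv.toMonoidHom_eq_coe, MonoidHom.coe_coe, MulAut.conj_apply]; group⟩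
    · rintro ⟨k, hk, rfl⟩
      simp only [MulEquiv.toMonoidHom_eq_coe, MonoidHom.coe_coe, MulAut.conj_apply]
      have : c⁻¹ * (c * k * c⁻¹ * c) = k := by group
      rw [this]; exact hk
  rw [if_congr hmem rfl rfl]
  ring

/-- H normal: grpSum H commutes with singles -/
lemma grpSum_normal_comm {H : Subgroup G} (hN : H.Normal) (c : G) :
    grpSum (subFinset H) * MonoidAlgebra.single c (1 : ℤ)
      = MonoidAlgebra.single c (1 : ℤ) * grpSum (subFinset H) := by
  ext g
  rw [MonoidAlgebra.mul_single_apply, MonoidAlgebra.single_mul_apply]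
  rw [grpSum_apply, grpSum_apply, mul_comm]
  congr 1
  apply if_congr _ rfl rfl
  rw [mem_subFinset, mem_subFinset]
  constructor
  · intro h
    have := hN.conj_mem _ h c⁻¹
    have he : c⁻¹ * (g * c⁻¹) * c⁻¹⁻¹ = c⁻¹ * g := by group
    rwa [he] at this
  · intro h
    have := hN.conj_mem _ h c
    have he : c * (c⁻¹ * g) * c⁻¹ = g * c⁻¹ := by group
    rwa [he] at this

lemma single_mul_univ (c : G) :
    MonoidAlgebra.single c (1 : ℤ) * grpSum Finset.univ = grpSum Finset.univ := by
  ext g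
  rw [MonoidAlgebra.single_mul_apply]
  simp [grpSum_apply]

lemma conjSub_mul (b c : G) (K : Subgroup G) :
    conjSub (b * c) K = conjSub b (conjSub c K) := by
  ext g
  simp only [conjSub, Subgroup.mem_map, MulEquiv.toMonoidHom_eq_coe, MonoidHom.coe_coe,
    MulAut.conj_apply]
  constructor
  · rintro ⟨k, hk, rfl⟩
    exact ⟨c * k * c⁻¹, ⟨k, hk, rfl⟩, by group⟩
  · rintro ⟨m, ⟨k, hk, rfl⟩, rfl⟩
    exact ⟨k, hk, by group⟩

lemma conjSub_le {H : Subgroup G} (hN : H.Normal) {K : Subgroup G} (hK : K ≤ H) (c : G) :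
    conjSub c K ≤ H := by
  rintro g ⟨k, hk, rfl⟩
  exact hN.conj_mem _ (hK hk) c

lemma card_conjSub (c : G) (K : Subgroup G) : Nat.card (conjSub c K) = Nat.card K := by
  apply Nat.card_congr
  exact ((MulEquiv.subgroupMap (MulAut.conj c) K).symm).toEquiv

end SpreadAux

open SpreadAux

/-- The Spread Construction: let `G` be a group of order 36 with a normal
elementary abelian subgroup `H` of order 9 whose order-3 subgroups are `L₀, …, L₃`, let
`{1, x, y, xy}` be a left transversal of `H` in `G`, `h₁, h₂, h₃ ∈ H`, and suppose
`{L₀, xL₁x⁻¹, yL₂y⁻¹, xyL₃(xy)⁻¹} = {L₀, L₁, L₂, L₃}`.  Then the coefficients of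
`S = L̂₀ − xh₁L̂₁ − yh₂L̂₂ − xyh₃L̂₃` are all `±1` and `{g : coefficient of g in S is 1}`
is a `(36, 15, 6)` difference set in `G`. -/
theorem spread_construction {G : Type*} [Group G] [Fintype G] [DecidableEq G]
    (hGcard : Fintype.card G = 36)
    (H : Subgroup G) (hHnormal : H.Normal) (hHcard : Nat.card H = 9)
    (hHexp : ∀ h ∈ H, h ^ 3 = 1)
    (hHcomm : ∀ h ∈ H, ∀ h' ∈ H, h * h' = h' * h)
    (L : Fin 4 → Subgroup G)
    (hLsub : ∀ i, L i ≤ H)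
    (hLinj : Function.Injective L)
    (hLcard : ∀ i, Nat.card (L i) = 3)
    (hLall : ∀ K : Subgroup G, K ≤ H → Nat.card K = 3 → ∃ i, L i = K)
    (x y : G)
    (htrans : ∀ g : G, ∃! i : Fin 4,
      (QuotientGroup.mk g : G ⧸ H) = QuotientGroup.mk (![1, x, y, x * y] i))
    (h₁ h₂ h₃ : G) (hh₁ : h₁ ∈ H) (hh₂ : h₂ ∈ H) (hh₃ : h₃ ∈ H)
    (hspread : ({L 0, conjSub x (L 1), conjSub y (L 2), conjSub (x * y) (L 3)} :
        Set (Subgroup G)) = {L 0, L 1, L 2, L 3})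
    (Lhat : Fin 4 → MonoidAlgebra ℤ G)
    (hLhat : ∀ i, Lhat i = grpSum (subFinset H) - 2 * grpSum (subFinset (L i)))
    (S : MonoidAlgebra ℤ G)
    (hS : S = Lhat 0 - MonoidAlgebra.single (x * h₁) (1 : ℤ) * Lhat 1
            - MonoidAlgebra.single (y * h₂) (1 : ℤ) * Lhat 2
            - MonoidAlgebra.single (x * y * h₃) (1 : ℤ) * Lhat 3) :
    (∀ g : G, S.coeff g = 1 ∨ S.coeff g = -1) ∧
    IsDiffSet 36 15 6 (Finset.univ.filter (fun g : G => S.coeff g = 1)) := by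
  classical
  -- local data
  set a : Fin 4 → G := ![1, x * h₁, y * h₂, x * y * h₃] with ha
  set ε : Fin 4 → ℤ := ![1, -1, -1, -1] with hε
  set K : Fin 4 → Subgroup G := ![L 0, conjSub x (L 1), conjSub y (L 2), conjSub (x * y) (L 3)]
    with hKdef
  have ha0 : a 0 = 1 := rfl
  have hε0 : ε 0 = 1 := rfl
  have hεneg : ∀ i : Fin 4, i ≠ 0 → ε i = -1 := by
    intro i hi; fin_cases i
    · exact absurd rfl hi
    all_goals rfl
  have hεpm : ∀ i : Fin 4, ε i = 1 ∨ ε i = -1 := by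
    intro i; fin_cases i
    · exact Or.inl rfl
    all_goals exact Or.inr rfl
  set Hs : MonoidAlgebra ℤ G := grpSum (subFinset H) with hHs
  set Ls : Fin 4 → MonoidAlgebra ℤ G := fun i => grpSum (subFinset (L i)) with hLsdef
  have hone : (1 : MonoidAlgebra ℤ G) = MonoidAlgebra.single 1 1 := MonoidAlgebra.one_def
  have hsmulap : ∀ (c : ℤ) (f : MonoidAlgebra ℤ G) (u : G), (c • f).coeff u = c * f.coeff u :=
    fun _ _ _ => rfl
  have hHshift : ∀ k ∈ H, ∀ u : G, (k⁻¹ * u ∈ H ↔ u ∈ H) := fun k hk u =>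
    ⟨fun h => by simpa [mul_inv_cancel_left] using H.mul_mem hk h,
     fun h => H.mul_mem (H.inv_mem hk) h⟩
  -- transversal facts
  have C1 : ∀ g : G, ∃! i : Fin 4, (a i)⁻¹ * g ∈ H := by
    intro g
    have hiff : ∀ i : Fin 4, ((QuotientGroup.mk g : G ⧸ H) = QuotientGroup.mk (![1, x, y, x * y] i))
        ↔ ((a i)⁻¹ * g ∈ H) := by
      intro i
      rw [eq_comm, QuotientGroup.eq]
      fin_cases i
      · simp [ha0]
      · show x⁻¹ * g ∈ H ↔ (x * h₁)⁻¹ * g ∈ H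
        rw [mul_inv_rev, mul_assoc, hHshift h₁ hh₁]
      · show y⁻¹ * g ∈ H ↔ (y * h₂)⁻¹ * g ∈ H
        rw [mul_inv_rev, mul_assoc, hHshift h₂ hh₂]
      · show (x * y)⁻¹ * g ∈ H ↔ (x * y * h₃)⁻¹ * g ∈ H
        rw [mul_inv_rev (x*y) h₃, mul_assoc, hHshift h₃ hh₃]
    have := htrans g
    refine ⟨(this.choose), (hiff _).1 this.choose_spec.1, fun j hj => this.choose_spec.2 j ((hiff j).2 hj)⟩
  have C2 : ∀ g : G, ∃! j : Fin 4, g * a j ∈ H := by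
    intro g
    have hiff : ∀ j : Fin 4, (g * a j ∈ H) ↔ ((a j)⁻¹ * g⁻¹ ∈ H) := by
      intro j
      rw [show (a j)⁻¹ * g⁻¹ = (g * a j)⁻¹ by rw [mul_inv_rev], inv_mem_iff]
    obtain ⟨i, hi, hu⟩ := C1 g⁻¹
    exact ⟨i, (hiff i).2 hi, fun j hj => hu j ((hiff j).1 hj)⟩
  have hC10 : ∀ g : G, ((a 0)⁻¹ * g ∈ H) ↔ g ∈ H := by intro g; rw [ha0]; simp
  have hC20 : ∀ g : G, (g * a 0 ∈ H) ↔ g ∈ H := by intro g; rw [ha0]; simp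
  -- subgroup order-3 structure
  have hzpcard : ∀ g ∈ H, g ≠ 1 → Nat.card (Subgroup.zpowers g) = 3 := by
    intro g hg hg1
    rw [Nat.card_zpowers]
    have hdvd : orderOf g ∣ 3 := orderOf_dvd_of_pow_eq_one (hHexp g hg)
    rcases (Nat.prime_three.eq_one_or_self_of_dvd _ hdvd) with h | h
    · exact absurd (orderOf_eq_one_iff.1 h) hg1
    · exact h
  have hzp : ∀ g ∈ H, g ≠ 1 → ∀ i, g ∈ L i → L i = Subgroup.zpowers g := by
    intro g hg hg1 i hgi
    have hle : Subgroup.zpowers g ≤ L i := Subgroup.zpowers_le.2 hgi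
    exact (Subgroup.eq_of_le_of_card_ge hle (by rw [hLcard i, hzpcard g hg hg1])).symm
  have huniqL : ∀ g ∈ H, g ≠ 1 → ∃! i, g ∈ L i := by
    intro g hg hg1
    obtain ⟨i, hi⟩ := hLall (Subgroup.zpowers g) (Subgroup.zpowers_le.2 hg) (hzpcard g hg hg1)
    refine ⟨i, by show g ∈ L i; rw [hi]; exact Subgroup.mem_zpowers g, fun j hj => hLinj ?_⟩
    rw [hzp g hg hg1 j hj, hi]
  have hmeet : ∀ i j : Fin 4, i ≠ j → L i ⊓ L j = ⊥ := by
    intro i j hij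
    rcases Subgroup.bot_or_exists_ne_one (L i ⊓ L j) with h | ⟨g, hg, hg1⟩
    · exact h
    · exfalso
      have hgH : g ∈ H := hLsub i hg.1
      obtain ⟨i0, _, hu⟩ := huniqL g hgH hg1
      exact hij ((hu i hg.1).trans (hu j hg.2).symm)
  -- product table
  have hHH : Hs * Hs = (9:ℤ) • Hs := by
    have := sub_mul_sub (le_refl H) (G := G); rw [hHcard] at this
    rw [hHs]; exact_mod_cast this
  have hHL : ∀ i, Hs * Ls i = (3:ℤ) • Hs := by
    intro i
    have := sub_mul_sub (hLsub i); rw [hLcard i] at this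
    rw [hHs, hLsdef]; exact_mod_cast this
  have hLH : ∀ i, Ls i * Hs = (3:ℤ) • Hs := by
    intro i
    have := sub_mul_sub' (hLsub i); rw [hLcard i] at this
    rw [hHs, hLsdef]; exact_mod_cast this
  have hLsq : ∀ i, Ls i * Ls i = (3:ℤ) • Ls i := by
    intro i
    have := sub_mul_sub (le_refl (L i)); rw [hLcard i] at this
    rw [hLsdef]; exact_mod_cast this
  have hLL : ∀ i j, i ≠ j → Ls i * Ls j = Hs := by
    intro i j hij
    exact sub_mul_sub_disjoint (hLsub i) (hLsub j) (hmeet i j hij)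
      (by rw [hLcard i, hLcard j, hHcard])
  have hLhat' : ∀ i, Lhat i = Hs - (2:ℤ) • Ls i := by
    intro i
    rw [hLhat i, hHs, hLsdef]
    congr 1
    rw [zsmul_eq_mul]; norm_num
  have hLhatmul : ∀ i j, Lhat i * Lhat j
      = Hs + (if i = j then ((12:ℤ) • Ls i - (4:ℤ) • Hs) else 0) := by
    intro i j
    rw [hLhat' i, hLhat' j, sub_mul, mul_sub, mul_sub]
    simp only [smul_mul_assoc, mul_smul_comm]
    rw [hHH, hHL j, hLH i]
    by_cases hij : i = j
    · subst hij
      rw [hLsq i, if_pos rfl]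
      module
    · rw [hLL i j hij, if_neg hij]
      module
  -- conjugation facts
  have hconjH : ∀ c : G, conjSub c H = H := by
    intro c
    ext g
    constructor
    · rintro ⟨k, hk, rfl⟩
      exact hHnormal.conj_mem _ hk c
    · intro hg
      refine ⟨c⁻¹ * g * c, ?_, by simp [conjSub, MulAut.conj]; group⟩
      have := hHnormal.conj_mem _ hg c⁻¹
      simpa using this
  have hconjhL : ∀ h ∈ H, ∀ i, conjSub h (L i) = L i := by
    intro h hh i
    have key : ∀ l ∈ L i, h * l * h⁻¹ = l := by
      intro l hl
      rw [hHcomm h hh l (hLsub i hl), mul_assoc, mul_inv_cancel, mul_one]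
    ext g
    simp only [conjSub, Subgroup.mem_map, MulEquiv.toMonoidHom_eq_coe, MonoidHom.coe_coe,
      MulAut.conj_apply]
    constructor
    · rintro ⟨l, hl, rfl⟩
      rw [key l hl]; exact hl
    · intro hg
      exact ⟨g, hg, key g hg⟩
  have hconjK : ∀ i, conjSub (a i) (L i) = K i := by
    intro i
    fin_cases i
    · show conjSub 1 (L 0) = L 0
      ext g; constructor
      · rintro ⟨l, hl, rfl⟩; simpa [conjSub, MulAut.conj] using hl
      · intro hg; exact ⟨g, hg, by simp [conjSub, MulAut.conj]⟩
    · show conjSub (x * h₁) (L 1) = conjSub x (L 1)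
      rw [conjSub_mul, hconjhL h₁ hh₁]
    · show conjSub (y * h₂) (L 2) = conjSub y (L 2)
      rw [conjSub_mul, hconjhL h₂ hh₂]
    · show conjSub (x * y * h₃) (L 3) = conjSub (x * y) (L 3)
      rw [conjSub_mul, hconjhL h₃ hh₃]
  have hconjLs : ∀ i, MonoidAlgebra.single (a i) (1:ℤ) * Ls i * MonoidAlgebra.single ((a i)⁻¹) (1:ℤ)
      = grpSum (subFinset (K i)) := by
    intro i
    rw [hLsdef, single_mul_grpSum_mul_single, hconjK i]
  have hconjHs : ∀ i, MonoidAlgebra.single (a i) (1:ℤ) * Hs * MonoidAlgebra.single ((a i)⁻¹) (1:ℤ)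
      = Hs := by
    intro i
    rw [hHs, single_mul_grpSum_mul_single, hconjH]
  -- spread permutation
  have hKsum : ∑ i : Fin 4, grpSum (subFinset (K i)) = ∑ i : Fin 4, Ls i := by
    have hKex : ∀ i : Fin 4, ∃ j, K i = L j := by
      intro i
      have hmem : K i ∈ ({L 0, L 1, L 2, L 3} : Set (Subgroup G)) := by
        rw [← hspread]
        fin_cases i
        · exact Set.mem_insert _ _
        · exact Set.mem_insert_iff.2 (Or.inr (Set.mem_insert _ _))
        · exact Set.mem_insert_iff.2 (Or.inr (Set.mem_insert_iff.2 (Or.inr (Set.mem_insert _ _))))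
        · exact Set.mem_insert_iff.2 (Or.inr (Set.mem_insert_iff.2 (Or.inr
            (Set.mem_insert_iff.2 (Or.inr rfl)))))
      simp only [Set.mem_insert_iff, Set.mem_singleton_iff] at hmem
      rcases hmem with h | h | h | h
      exacts [⟨0, h⟩, ⟨1, h⟩, ⟨2, h⟩, ⟨3, h⟩]
    choose σ hσ using hKex
    have hσsurj : Function.Surjective σ := by
      intro j
      have hmem : L j ∈ ({L 0, conjSub x (L 1), conjSub y (L 2), conjSub (x * y) (L 3)} :
          Set (Subgroup G)) := by
        rw [hspread]
        fin_cases j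
        · exact Set.mem_insert _ _
        · exact Set.mem_insert_iff.2 (Or.inr (Set.mem_insert _ _))
        · exact Set.mem_insert_iff.2 (Or.inr (Set.mem_insert_iff.2 (Or.inr (Set.mem_insert _ _))))
        · exact Set.mem_insert_iff.2 (Or.inr (Set.mem_insert_iff.2 (Or.inr
            (Set.mem_insert_iff.2 (Or.inr rfl)))))
      simp only [Set.mem_insert_iff, Set.mem_singleton_iff] at hmem
      rcases hmem with h | h | h | h
      · refine ⟨0, hLinj ?_⟩
        rw [← hσ 0]; show K 0 = L j
        rw [show K 0 = L 0 from rfl, ← h]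
      · refine ⟨1, hLinj ?_⟩
        rw [← hσ 1]; show K 1 = L j
        rw [show K 1 = conjSub x (L 1) from rfl, ← h]
      · refine ⟨2, hLinj ?_⟩
        rw [← hσ 2]; show K 2 = L j
        rw [show K 2 = conjSub y (L 2) from rfl, ← h]
      · refine ⟨3, hLinj ?_⟩
        rw [← hσ 3]; show K 3 = L j
        rw [show K 3 = conjSub (x * y) (L 3) from rfl, ← h]
    have hσbij : Function.Bijective σ := Finite.surjective_iff_bijective.mp hσsurj
    calc ∑ i : Fin 4, grpSum (subFinset (K i))
        = ∑ i : Fin 4, grpSum (subFinset (L (σ i))) := by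
          apply Finset.sum_congr rfl
          intro i _
          rw [← hσ i]
      _ = ∑ j : Fin 4, Ls j := hσbij.sum_comp (fun j => grpSum (subFinset (L j)))
  -- sum of the four L's
  have hLsum : ∑ i : Fin 4, Ls i = Hs + (3:ℤ) • (1 : MonoidAlgebra ℤ G) := by
    ext g
    rw [cf_sum_apply, cf_add_apply, cf_smul_apply, hone,
      MonoidAlgebra.single_apply, hHs]
    have hterm : ∀ i : Fin 4, (Ls i).coeff g = if g ∈ L i then 1 else 0 := by
      intro i
      rw [hLsdef]
      simp only [grpSum_apply]
      simp [mem_subFinset]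
    simp only [hterm, grpSum_apply]
    by_cases hg1 : g = 1
    · subst hg1
      rw [Fin.sum_univ_four]
      simp [mem_subFinset, H.one_mem, (L 0).one_mem, (L 1).one_mem, (L 2).one_mem, (L 3).one_mem]
    · by_cases hgH : g ∈ H
      · obtain ⟨i0, hi0, hu⟩ := huniqL g hgH hg1
        rw [Finset.sum_eq_single i0]
        · rw [if_pos hi0]
          simp [mem_subFinset, hgH, Ne.symm hg1]
        · intro b _ hb
          rw [if_neg (fun hgb => hb (hu b hgb))]
        · intro h; exact absurd (Finset.mem_univ i0) h
      · rw [Finset.sum_eq_zero]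
        · simp [mem_subFinset, hgH, Ne.symm hg1]
        · intro i _
          rw [if_neg (fun hgi => hgH (hLsub i hgi))]
  -- coset sums
  have F1 : ∑ i : Fin 4, ε i • (MonoidAlgebra.single (a i) (1:ℤ) * Hs)
      = (2:ℤ) • Hs - grpSum Finset.univ := by
    ext g
    rw [cf_sum_apply, cf_sub_apply, cf_smul_apply, hHs]
    simp only [hsmulap, MonoidAlgebra.single_mul_apply, one_mul, smul_eq_mul,
      grpSum_apply, Finset.mem_univ, if_true]
    obtain ⟨i0, hi0, hu⟩ := C1 g
    have hLHS : ∑ i : Fin 4, ε i * (if (a i)⁻¹ * g ∈ subFinset H then (1:ℤ) else 0) = ε i0 := by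
      rw [Finset.sum_eq_single i0]
      · rw [if_pos (mem_subFinset.2 hi0), mul_one]
      · intro b _ hb
        rw [if_neg (fun hgb => hb (hu b (mem_subFinset.1 hgb))), mul_zero]
      · intro h; exact absurd (Finset.mem_univ i0) h
    rw [hLHS]
    by_cases hgH : g ∈ H
    · have h00 : i0 = 0 := (hu 0 ((hC10 g).2 hgH)).symm
      rw [h00, hε0, if_pos (mem_subFinset.2 hgH)]
      norm_num
    · have h00 : i0 ≠ 0 := fun hc => hgH ((hC10 g).1 (hc ▸ hi0))
      rw [hεneg i0 h00, if_neg (fun hc => hgH (mem_subFinset.1 hc))]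
      norm_num
  have F2 : ∑ j : Fin 4, ε j • (Hs * MonoidAlgebra.single ((a j)⁻¹) (1:ℤ))
      = (2:ℤ) • Hs - grpSum Finset.univ := by
    ext g
    rw [cf_sum_apply, cf_sub_apply, cf_smul_apply, hHs]
    simp only [hsmulap, MonoidAlgebra.mul_single_apply, mul_one, inv_inv,
      smul_eq_mul, grpSum_apply, Finset.mem_univ, if_true]
    obtain ⟨i0, hi0, hu⟩ := C2 g
    have hLHS : ∑ j : Fin 4, ε j * (if g * a j ∈ subFinset H then (1:ℤ) else 0) = ε i0 := by
      rw [Finset.sum_eq_single i0]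
      · rw [if_pos (mem_subFinset.2 hi0), mul_one]
      · intro b _ hb
        rw [if_neg (fun hgb => hb (hu b (mem_subFinset.1 hgb))), mul_zero]
      · intro h; exact absurd (Finset.mem_univ i0) h
    rw [hLHS]
    by_cases hgH : g ∈ H
    · have h00 : i0 = 0 := (hu 0 ((hC20 g).2 hgH)).symm
      rw [h00, hε0, if_pos (mem_subFinset.2 hgH)]
      norm_num
    · have h00 : i0 ≠ 0 := fun hc => hgH ((hC20 g).1 (hc ▸ hi0))
      rw [hεneg i0 h00, if_neg (fun hc => hgH (mem_subFinset.1 hc))]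
      norm_num
  -- S as a sum
  have hSsum : S = ∑ i : Fin 4, ε i • (MonoidAlgebra.single (a i) (1:ℤ) * Lhat i) := by
    rw [hS, Fin.sum_univ_four]
    rw [show a 0 = 1 from rfl, show a 1 = x * h₁ from rfl, show a 2 = y * h₂ from rfl,
      show a 3 = x * y * h₃ from rfl, show ε 0 = 1 from rfl, show ε 1 = -1 from rfl,
      show ε 2 = -1 from rfl, show ε 3 = -1 from rfl, ← hone, one_mul, one_smul,
      neg_smul, one_smul, neg_smul, one_smul, neg_smul, one_smul]
    abel
  set S' : MonoidAlgebra ℤ G :=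
    ∑ i : Fin 4, ε i • (Lhat i * MonoidAlgebra.single ((a i)⁻¹) (1:ℤ)) with hS'def
  -- the key ring identity
  have hsumε : ∑ i : Fin 4, ε i = -2 := by
    rw [Fin.sum_univ_four, show ε 0 = 1 from rfl, show ε 1 = -1 from rfl,
      show ε 2 = -1 from rfl, show ε 3 = -1 from rfl]
    norm_num
  have hee : ∀ i : Fin 4, ε i * ε i = 1 := by
    intro i
    rcases hεpm i with h | h <;> rw [h] <;> norm_num
  have hSS' : S * S' = (36:ℤ) • (1 : MonoidAlgebra ℤ G) := by
    have hterm : ∀ i j : Fin 4,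
        (ε i • (MonoidAlgebra.single (a i) (1:ℤ) * Lhat i)) *
          (ε j • (Lhat j * MonoidAlgebra.single ((a j)⁻¹) (1:ℤ)))
        = (ε i * ε j) • (MonoidAlgebra.single (a i) (1:ℤ) * Hs
            * MonoidAlgebra.single ((a j)⁻¹) (1:ℤ))
          + (if i = j then ((ε i * ε i) • (MonoidAlgebra.single (a i) (1:ℤ)
              * ((12:ℤ) • Ls i - (4:ℤ) • Hs) * MonoidAlgebra.single ((a i)⁻¹) (1:ℤ))) else 0) := by
      intro i j
      rw [smul_mul_assoc, mul_smul_comm, smul_smul]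
      have hassoc : MonoidAlgebra.single (a i) (1:ℤ) * Lhat i
          * (Lhat j * MonoidAlgebra.single ((a j)⁻¹) (1:ℤ))
          = MonoidAlgebra.single (a i) (1:ℤ) * (Lhat i * Lhat j)
            * MonoidAlgebra.single ((a j)⁻¹) (1:ℤ) := by
        simp only [mul_assoc]
      rw [hassoc, hLhatmul i j]
      by_cases hij : i = j
      · subst hij
        rw [if_pos rfl, if_pos rfl, mul_add, add_mul, smul_add]
      · rw [if_neg hij, if_neg hij, add_zero, add_zero]
    rw [hSsum, hS'def, Finset.sum_mul_sum]
    simp only [hterm, Finset.sum_add_distrib, Finset.sum_ite_eq, Finset.mem_univ, if_true]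
    -- part 1
    have hp1 : ∀ i : Fin 4, ∑ j : Fin 4,
        (ε i * ε j) • (MonoidAlgebra.single (a i) (1:ℤ) * Hs
          * MonoidAlgebra.single ((a j)⁻¹) (1:ℤ))
        = ε i • (MonoidAlgebra.single (a i) (1:ℤ) * ((2:ℤ) • Hs - grpSum Finset.univ)) := by
      intro i
      rw [← F2, Finset.mul_sum, Finset.smul_sum]
      apply Finset.sum_congr rfl
      intro j _
      rw [mul_smul_comm, smul_smul, mul_assoc]
    have hpart1 : ∑ i : Fin 4, ∑ j : Fin 4,
        (ε i * ε j) • (MonoidAlgebra.single (a i) (1:ℤ) * Hs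
          * MonoidAlgebra.single ((a j)⁻¹) (1:ℤ)) = (4:ℤ) • Hs := by
      simp only [hp1]
      have hstep : ∀ i : Fin 4,
          ε i • (MonoidAlgebra.single (a i) (1:ℤ) * ((2:ℤ) • Hs - grpSum Finset.univ))
          = (2:ℤ) • (ε i • (MonoidAlgebra.single (a i) (1:ℤ) * Hs)) - ε i • grpSum Finset.univ := by
        intro i
        rw [mul_sub, mul_smul_comm, single_mul_univ, smul_sub, smul_comm]
      simp only [hstep]
      rw [Finset.sum_sub_distrib, ← Finset.smul_sum, F1, ← Finset.sum_smul, hsumε]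
      module
    rw [hpart1]
    -- part 2
    have hZ : ∀ i : Fin 4, MonoidAlgebra.single (a i) (1:ℤ)
        * ((12:ℤ) • Ls i - (4:ℤ) • Hs) * MonoidAlgebra.single ((a i)⁻¹) (1:ℤ)
        = (12:ℤ) • grpSum (subFinset (K i)) - (4:ℤ) • Hs := by
      intro i
      rw [mul_sub, sub_mul, mul_smul_comm, mul_smul_comm, smul_mul_assoc, smul_mul_assoc,
        hconjLs i, hconjHs i]
    simp only [hee, one_smul, hZ]
    rw [Finset.sum_sub_distrib, ← Finset.smul_sum, hKsum, hLsum, Finset.sum_const,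
      Finset.card_univ, Fintype.card_fin]
    module
  -- coefficient facts
  have hLhat_apply : ∀ i (w : G), (Lhat i).coeff w = if w ∈ H then (if w ∈ L i then -1 else 1) else 0 := by
    intro i w
    rw [hLhat' i, cf_sub_apply, hsmulap, hHs, hLsdef]
    simp only [grpSum_apply]
    by_cases hwH : w ∈ H
    · by_cases hwL : w ∈ L i
      · simp [mem_subFinset, hwH, hwL]
      · simp [mem_subFinset, hwH, hwL]
    · have hwL : w ∉ L i := fun hc => hwH (hLsub i hc)
      simp [mem_subFinset, hwH, hwL]
  have hS_apply : ∀ g : G, S.coeff g = ∑ i : Fin 4, ε i * (Lhat i).coeff ((a i)⁻¹ * g) := by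
    intro g
    rw [hSsum, cf_sum_apply]
    apply Finset.sum_congr rfl
    intro i _
    rw [hsmulap, MonoidAlgebra.single_mul_apply, one_mul]
  have hpm : ∀ g : G, S.coeff g = 1 ∨ S.coeff g = -1 := by
    intro g
    rw [hS_apply g]
    obtain ⟨i0, hi0, hu⟩ := C1 g
    rw [Finset.sum_eq_single i0]
    · rw [hLhat_apply, if_pos hi0]
      rcases hεpm i0 with h | h <;> by_cases hL : (a i0)⁻¹ * g ∈ L i0 <;>
        simp [h, hL]
    · intro b _ hb
      rw [hLhat_apply, if_neg (fun hgb => hb (hu b hgb)), mul_zero]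
    · intro h; exact absurd (Finset.mem_univ i0) h
  have hS'_apply : ∀ g : G, S'.coeff g = S.coeff g⁻¹ := by
    intro g
    rw [hS'def, cf_sum_apply, hS_apply g⁻¹]
    apply Finset.sum_congr rfl
    intro i _
    rw [hsmulap, MonoidAlgebra.mul_single_apply, mul_one, inv_inv]
    congr 1
    rw [hLhat_apply, hLhat_apply]
    have hinv : (a i)⁻¹ * g⁻¹ = (g * a i)⁻¹ := by rw [mul_inv_rev]
    rw [hinv, inv_mem_iff (x := g * a i)]
    by_cases h1 : g * a i ∈ H
    · rw [if_pos h1, if_pos h1]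
      congr 1
      rw [inv_mem_iff]
    · rw [if_neg h1, if_neg h1]
  have hLtot : ∀ i, ∑ w : G, (Lhat i).coeff w = 3 := by
    intro i
    have h9 : ∑ w : G, Hs.coeff w = 9 := by
      rw [hHs, sum_grpSum, card_subFinset, hHcard]; norm_num
    have h3 : ∑ w : G, (Ls i).coeff w = 3 := by
      rw [hLsdef]
      show ∑ w : G, (grpSum (subFinset (L i))).coeff w = 3
      rw [sum_grpSum, card_subFinset, hLcard i]; norm_num
    calc ∑ w : G, (Lhat i).coeff w = ∑ w : G, (Hs.coeff w - 2 * (Ls i).coeff w) := by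
          apply Finset.sum_congr rfl
          intro w _
          rw [hLhat' i, cf_sub_apply, hsmulap]
      _ = 9 - 2 * 3 := by rw [Finset.sum_sub_distrib, h9, ← Finset.mul_sum, h3]
      _ = 3 := by norm_num
  have hsumS : ∑ g : G, S.coeff g = -6 := by
    have hshift : ∀ i : Fin 4, ∑ g : G, (Lhat i).coeff ((a i)⁻¹ * g) = ∑ w : G, (Lhat i).coeff w := by
      intro i
      exact Fintype.sum_equiv (Equiv.mulLeft (a i)⁻¹) _ _ (fun g => rfl)
    calc ∑ g : G, S.coeff g = ∑ g : G, ∑ i : Fin 4, ε i * (Lhat i).coeff ((a i)⁻¹ * g) := by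
          exact Finset.sum_congr rfl (fun g _ => hS_apply g)
      _ = ∑ i : Fin 4, ε i * ∑ g : G, (Lhat i).coeff ((a i)⁻¹ * g) := by
          rw [Finset.sum_comm]
          exact Finset.sum_congr rfl (fun i _ => by rw [Finset.mul_sum])
      _ = ∑ i : Fin 4, ε i * 3 := by
          exact Finset.sum_congr rfl (fun i _ => by rw [hshift i, hLtot i])
      _ = (∑ i : Fin 4, ε i) * 3 := by rw [Finset.sum_mul]
      _ = -6 := by rw [hsumε]; norm_num
  refine ⟨hpm, hGcard, ?_, ?_⟩
  · -- card = 15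
    have h2 : ∑ g : G, (if S.coeff g = 1 then (1:ℤ) else -1) = -6 := by
      rw [← hsumS]
      apply Finset.sum_congr rfl
      intro g _
      rcases hpm g with h | h
      · rw [if_pos h, h]
      · rw [if_neg (by rw [h]; norm_num), h]
    rw [Finset.sum_ite, Finset.sum_const, Finset.sum_const] at h2
    have hcards := Finset.card_filter_add_card_filter_not
      (s := (Finset.univ : Finset G)) (p := fun g : G => S.coeff g = 1)
    rw [Finset.card_univ, hGcard] at hcards
    simp only [nsmul_eq_mul, mul_one, mul_neg] at h2
    omega
  · -- difference counts
    intro g hg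
    have hkey : (S * S').coeff g = 0 := by
      rw [hSS', hsmulap, hone, MonoidAlgebra.single_apply,
        if_neg (fun hc => hg hc.symm), mul_zero]
    have hconv : (S * S').coeff g = ∑ b : G, S.coeff (g * b) * S.coeff b := by
      rw [mul_apply_conv]
      refine (Fintype.sum_equiv (Equiv.mulLeft g) _ _ ?_).symm
      intro b
      have hb : (((Equiv.mulLeft g) b)⁻¹ * g)⁻¹ = b := by
        simp only [Equiv.coe_mulLeft]
        group
      show S.coeff (g * b) * S.coeff b = S.coeff ((Equiv.mulLeft g) b) * S'.coeff (((Equiv.mulLeft g) b)⁻¹ * g)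
      rw [hS'_apply, hb, Equiv.coe_mulLeft]
    have hbij : (((Finset.univ.filter (fun g : G => S.coeff g = 1)) ×ˢ
          (Finset.univ.filter (fun g : G => S.coeff g = 1))).filter
          (fun p => p.1 * p.2⁻¹ = g)).card
        = (Finset.univ.filter (fun b : G => S.coeff b = 1 ∧ S.coeff (g * b) = 1)).card := by
      apply Finset.card_bij (fun p _ => p.2)
      · rintro ⟨u, v⟩ hp
        simp only [Finset.mem_filter, Finset.mem_product, Finset.mem_univ, true_and] at hp ⊢
        obtain ⟨⟨hu, hv⟩, he⟩ := hp
        refine ⟨hv, ?_⟩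
        have hgv : g * v = u := by rw [← he]; group
        rw [hgv]; exact hu
      · rintro ⟨u, v⟩ hp ⟨u', v'⟩ hp' h
        simp only [Finset.mem_filter] at hp hp'
        simp only at h
        have hu : u = g * v := by rw [← hp.2]; group
        have hu' : u' = g * v' := by rw [← hp'.2]; group
        rw [Prod.ext_iff]
        exact ⟨by rw [hu, hu', h], h⟩
      · intro b hb
        simp only [Finset.mem_filter, Finset.mem_univ, true_and] at hb
        refine ⟨(g * b, b), ?_, rfl⟩
        simp only [Finset.mem_filter, Finset.mem_product, Finset.mem_univ, true_and]
        exact ⟨⟨hb.2, hb.1⟩, by group⟩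
    have hterm4 : ∀ b : G, (1 + S.coeff (g * b)) * (1 + S.coeff b)
        = if S.coeff b = 1 ∧ S.coeff (g * b) = 1 then (4:ℤ) else 0 := by
      intro b
      rcases hpm (g * b) with h1 | h1 <;> rcases hpm b with h2 | h2 <;>
        norm_num [h1, h2]
    have hsum4 : ∑ b : G, (1 + S.coeff (g * b)) * (1 + S.coeff b)
        = 4 * ((Finset.univ.filter (fun b : G => S.coeff b = 1 ∧ S.coeff (g * b) = 1)).card : ℤ) := by
      simp only [hterm4]
      rw [← Finset.sum_filter, Finset.sum_const, nsmul_eq_mul]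
      ring
    have hexpand : ∑ b : G, (1 + S.coeff (g * b)) * (1 + S.coeff b)
        = 36 + (-6) + (-6) + (S * S').coeff g := by
      have hre : ∑ b : G, S.coeff (g * b) = -6 := by
        rw [← hsumS]
        exact Fintype.sum_equiv (Equiv.mulLeft g) _ _ (fun b => rfl)
      calc ∑ b : G, (1 + S.coeff (g * b)) * (1 + S.coeff b)
          = ∑ b : G, (1 + S.coeff (g * b) + (S.coeff b + S.coeff (g * b) * S.coeff b)) := by
            apply Finset.sum_congr rfl; intro b _; ring
        _ = 36 + (-6) + (-6) + (S * S').coeff g := by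
            rw [Finset.sum_add_distrib, Finset.sum_add_distrib, Finset.sum_add_distrib,
              Finset.sum_const, Finset.card_univ, hGcard, hre, hsumS, hconv]
            push_cast; ring
    rw [hbij]
    have hfin : 4 * ((Finset.univ.filter (fun b : G => S.coeff b = 1 ∧ S.coeff (g * b) = 1)).card : ℤ)
        = 24 := by
      rw [← hsum4, hexpand, hkey]; norm_num
    omega
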